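/- Let δ ∈ (0,1], t ∈ [1,4/3), and m ≈ δ^{-t/2}. Let B₁,…,B_m be pairwise disjoint discs in [0,1]² of radius 10δ^{1-t/2} with pairwise distances dist(B_i,B_j) ≥ c·δ^{t/4} for i ≠ j. Suppose each B_i contains a family S_i of δ-squares along a segment of length δ^{1-t/2} (so |S_i| ≤ C₀δ^{-t/2} and |S_i ∩ B(x,r)| ≤ C₀ r/δ for all x, r ≥ δ). Then P = ∪_i S_i satisfies |P ∩ B(x,r)| ≤ C(r/δ)^t for all x ∈ ℝ² and δ ≤ r ≤ 1, with C depending only on c, C₀. -/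
import Mathlib

open MeasureTheory Metric Set Filter

/-- The closed dyadic δ-square [jδ,(j+1)δ] × [kδ,(k+1)δ]. -/
def dsq (δ : ℝ) (j k : ℤ) : Set (EuclideanSpace ℝ (Fin 2)) :=
  {x | x 0 ∈ Set.Icc (j * δ) ((j + 1) * δ) ∧ x 1 ∈ Set.Icc (k * δ) ((k + 1) * δ)}

/-- The unit square [0,1]². -/
def unitSq : Set (EuclideanSpace ℝ (Fin 2)) :=
  {x | x 0 ∈ Set.Icc (0:ℝ) 1 ∧ x 1 ∈ Set.Icc (0:ℝ) 1}

private lemma packing {ι : Type*} (A : Finset ι) (a : ι → EuclideanSpace ℝ (Fin 2))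
    (x : EuclideanSpace ℝ (Fin 2)) (r s : ℝ) (hs : 0 < s) (hr : 0 ≤ r)
    (hA : ∀ i ∈ A, a i ∈ Metric.closedBall x r)
    (hsep : ∀ i ∈ A, ∀ j ∈ A, i ≠ j → s ≤ dist (a i) (a j)) :
    (A.card : ℝ) ≤ (2 * r / s + 1) ^ 2 := by
  have hs2 : (0:ℝ) < s / 2 := by linarith
  have hdisj : (A : Set ι).PairwiseDisjoint (fun i => ball (a i) (s / 2)) := by
    intro i hi j hj hij
    apply Set.disjoint_left.2
    intro z hzi hzj
    have := hsep i hi j hj hij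
    have h1 := mem_ball.1 hzi
    have h2 := mem_ball.1 hzj
    have : dist (a i) (a j) ≤ dist z (a i) + dist z (a j) := dist_triangle_left _ _ _
    linarith
  have hsub : (⋃ i ∈ A, ball (a i) (s / 2)) ⊆ ball x (r + s / 2) := by
    intro z hz
    simp only [Set.mem_iUnion] at hz
    obtain ⟨i, hi, hzi⟩ := hz
    have h1 := mem_ball.1 hzi
    have h2 := mem_closedBall.1 (hA i hi)
    have : dist z x ≤ dist z (a i) + dist (a i) x := dist_triangle _ _ _
    exact mem_ball.2 (by linarith)
  have hV : volume (⋃ i ∈ A, ball (a i) (s / 2)) = ∑ i ∈ A, volume (ball (a i) (s / 2)) :=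
    measure_biUnion_finset hdisj (fun i _ => measurableSet_ball)
  have hle : ∑ i ∈ A, volume (ball (a i) (s / 2)) ≤ volume (ball x (r + s / 2)) := by
    rw [← hV]; exact measure_mono hsub
  have hdim : Module.finrank ℝ (EuclideanSpace ℝ (Fin 2)) = 2 := finrank_euclideanSpace_fin
  have hball : ∀ y : EuclideanSpace ℝ (Fin 2), ∀ ρ : ℝ, 0 ≤ ρ →
      volume (ball y ρ) = ENNReal.ofReal (ρ ^ 2) * volume (ball (0 : EuclideanSpace ℝ (Fin 2)) 1) := by
    intro y ρ hρ
    rw [Measure.addHaar_ball volume y hρ, hdim]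
  set V := volume (ball (0 : EuclideanSpace ℝ (Fin 2)) 1) with hVdef
  have hVpos : 0 < V := measure_ball_pos _ _ one_pos
  have hVtop : V ≠ ⊤ := measure_ball_lt_top.ne
  rw [hball x (r + s/2) (by linarith)] at hle
  have : ∑ i ∈ A, volume (ball (a i) (s / 2)) = (A.card : ENNReal) * (ENNReal.ofReal ((s/2) ^ 2) * V) := by
    rw [Finset.sum_congr rfl (fun i _ => hball (a i) (s/2) hs2.le)]
    simp [Finset.sum_const, nsmul_eq_mul]
  rw [this] at hle
  have hle2 : (A.card : ENNReal) * ENNReal.ofReal ((s/2) ^ 2) ≤ ENNReal.ofReal ((r + s/2) ^ 2) := by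
    rw [← mul_assoc] at hle
    exact (ENNReal.mul_le_mul_iff_left hVpos.ne' hVtop).1 hle
  have hreal : (A.card : ℝ) * (s/2) ^ 2 ≤ (r + s/2) ^ 2 := by
    rw [← ENNReal.ofReal_natCast, ← ENNReal.ofReal_mul (by positivity)] at hle2
    exact (ENNReal.ofReal_le_ofReal_iff (by positivity)).1 hle2
  have h1 : (A.card : ℝ) ≤ ((r + s/2) / (s/2)) ^ 2 := by
    rw [div_pow, le_div_iff₀ (by positivity)]
    exact hreal
  calc (A.card : ℝ) ≤ ((r + s/2) / (s/2)) ^ 2 := h1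
    _ = (2 * r / s + 1) ^ 2 := by field_simp

theorem stmt_6 (c C₀ : ℝ) (hc : 0 < c) (hC₀ : 0 < C₀) :
    ∃ C : ℝ, 0 < C ∧
    ∀ (δ t : ℝ), δ ∈ Set.Ioc (0:ℝ) 1 → t ∈ Set.Ico (1:ℝ) (4/3 : ℝ) →
    ∀ (m : ℕ) (cen : Fin m → EuclideanSpace ℝ (Fin 2)) (S : Fin m → Finset (ℤ × ℤ)),
      C₀⁻¹ * δ ^ (-t/2) ≤ m → (m : ℝ) ≤ C₀ * δ ^ (-t/2) →
      (∀ i, Metric.closedBall (cen i) (10 * δ ^ (1 - t/2)) ⊆ unitSq) →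
      (∀ i j, i ≠ j → ∀ a ∈ Metric.closedBall (cen i) (10 * δ ^ (1 - t/2)),
        ∀ b ∈ Metric.closedBall (cen j) (10 * δ ^ (1 - t/2)), c * δ ^ (t/4) ≤ dist a b) →
      (∀ i, ∀ q ∈ S i, dsq δ q.1 q.2 ⊆ Metric.closedBall (cen i) (10 * δ ^ (1 - t/2))) →
      (∀ i, ((S i).card : ℝ) ≤ C₀ * δ ^ (-t/2)) →
      (∀ i (x : EuclideanSpace ℝ (Fin 2)) (r : ℝ), δ ≤ r →
        ({q ∈ (S i : Set (ℤ × ℤ)) |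
            (dsq δ q.1 q.2 ∩ Metric.closedBall x r).Nonempty}.ncard : ℝ) ≤ C₀ * r / δ) →
      ∀ (x : EuclideanSpace ℝ (Fin 2)) (r : ℝ), δ ≤ r → r ≤ 1 →
        ({q ∈ ⋃ i, (S i : Set (ℤ × ℤ)) |
            (dsq δ q.1 q.2 ∩ Metric.closedBall x r).Nonempty}.ncard : ℝ)
          ≤ C * (r / δ) ^ t := by
  classical
  refine ⟨C₀ * (2 / c + 1) ^ 2, by positivity, ?_⟩
  rintro δ t ⟨hδ0, hδ1⟩ ⟨ht1, ht2⟩ m cen S _ _ _ hsep hsq hcard hloc x r hδr hr1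
  have hr0 : 0 < r := lt_of_lt_of_le hδ0 hδr
  have hu0 : (0:ℝ) < δ ^ (t/4) := Real.rpow_pos_of_pos hδ0 _
  set u := δ ^ (t/4) with hudef
  set R := 10 * δ ^ (1 - t/2) with hRdef
  -- the filtered finsets
  set T : Fin m → Finset (ℤ × ℤ) :=
    fun i => (S i).filter (fun q => (dsq δ q.1 q.2 ∩ Metric.closedBall x r).Nonempty) with hTdef
  have hsetT : ∀ i, {q ∈ (S i : Set (ℤ × ℤ)) |
      (dsq δ q.1 q.2 ∩ Metric.closedBall x r).Nonempty} = ((T i : Set (ℤ × ℤ))) := by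
    intro i; ext q; simp [hTdef, Finset.mem_filter]
  have hmain : {q ∈ ⋃ i, (S i : Set (ℤ × ℤ)) |
      (dsq δ q.1 q.2 ∩ Metric.closedBall x r).Nonempty}
      = ((Finset.univ.biUnion T : Finset (ℤ × ℤ)) : Set (ℤ × ℤ)) := by
    ext q
    simp [hTdef, Finset.mem_biUnion, Set.mem_iUnion]
  rw [hmain, Set.ncard_coe_finset]
  -- bound card of T i in two ways
  have hT1 : ∀ i, ((T i).card : ℝ) ≤ C₀ * r / δ := by
    intro i
    have := hloc i x r hδr
    rwa [hsetT i, Set.ncard_coe_finset] at this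
  have hT2 : ∀ i, ((T i).card : ℝ) ≤ C₀ * δ ^ (-t/2) := by
    intro i
    exact le_trans (by exact_mod_cast Finset.card_le_card (Finset.filter_subset _ _)) (hcard i)
  -- the set of active indices
  set I : Finset (Fin m) := Finset.univ.filter (fun i => (T i).Nonempty) with hIdef
  -- choose witness points
  have hex : ∀ i : Fin m, ∃ p : EuclideanSpace ℝ (Fin 2),
      i ∈ I → p ∈ Metric.closedBall (cen i) R ∧ p ∈ Metric.closedBall x r := by
    intro i
    by_cases hi : i ∈ I
    · obtain ⟨q, hq⟩ := (Finset.mem_filter.1 hi).2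
      obtain ⟨hqS, hqne⟩ := Finset.mem_filter.1 hq
      obtain ⟨p, hp1, hp2⟩ := hqne
      exact ⟨p, fun _ => ⟨hsq i q hqS hp1, hp2⟩⟩
    · exact ⟨x, fun h => absurd h hi⟩
  choose a ha using hex
  -- packing bound
  have hIcard : (I.card : ℝ) ≤ (2 * r / (c * u) + 1) ^ 2 := by
    refine packing I a x r (c * u) (by positivity) hr0.le
      (fun i hi => (ha i hi).2) (fun i hi j hj hij => ?_)
    exact hsep i j hij _ (ha i hi).1 _ (ha j hj).1
  -- sum bound
  have hsum : ((Finset.univ.biUnion T).card : ℝ) ≤ ∑ i ∈ I, ((T i).card : ℝ) := by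
    have h1 : (Finset.univ.biUnion T).card ≤ ∑ i, (T i).card := Finset.card_biUnion_le
    have h2 : ∑ i ∈ I, (T i).card = ∑ i, (T i).card := by
      refine Finset.sum_subset (Finset.subset_univ I) (fun i _ hi => ?_)
      rw [hIdef] at hi
      simp only [Finset.mem_filter, Finset.mem_univ, true_and] at hi
      simp [Finset.not_nonempty_iff_eq_empty.1 (fun h => hi h)]
    have h3 : (Finset.univ.biUnion T).card ≤ ∑ i ∈ I, (T i).card := by rw [h2]; exact h1
    exact_mod_cast h3
  have hrδ : (1:ℝ) ≤ r / δ := (one_le_div hδ0).2 hδr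
  have hrδ0 : (0:ℝ) < r / δ := by linarith
  rcases le_or_gt r u with hcase | hcase
  · -- small r : use C₀ r/δ per index, boundedly many indices
    have hIle : (I.card : ℝ) ≤ (2 / c + 1) ^ 2 := by
      refine hIcard.trans (pow_le_pow_left₀ (by positivity) ?_ 2)
      have : 2 * r / (c * u) ≤ 2 / c := by
        rw [div_le_div_iff₀ (by positivity) (by positivity)]
        nlinarith
      linarith
    have htot : ((Finset.univ.biUnion T).card : ℝ) ≤ (2 / c + 1) ^ 2 * (C₀ * r / δ) := by
      calc ((Finset.univ.biUnion T).card : ℝ) ≤ ∑ i ∈ I, ((T i).card : ℝ) := hsum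
        _ ≤ ∑ i ∈ I, (C₀ * r / δ) := Finset.sum_le_sum (fun i _ => hT1 i)
        _ = I.card * (C₀ * r / δ) := by rw [Finset.sum_const, nsmul_eq_mul]
        _ ≤ (2 / c + 1) ^ 2 * (C₀ * r / δ) := by
            apply mul_le_mul_of_nonneg_right hIle (by positivity)
    refine htot.trans ?_
    have hpow : r / δ ≤ (r / δ) ^ t := by
      calc r / δ = (r / δ) ^ (1:ℝ) := (Real.rpow_one _).symm
        _ ≤ (r / δ) ^ t := Real.rpow_le_rpow_of_exponent_le hrδ ht1
    calc (2 / c + 1) ^ 2 * (C₀ * r / δ) = C₀ * (2 / c + 1) ^ 2 * (r / δ) := by ring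
      _ ≤ C₀ * (2 / c + 1) ^ 2 * (r / δ) ^ t := by
          apply mul_le_mul_of_nonneg_left hpow (by positivity)
  · -- large r : use C₀ δ^{-t/2} per index
    have hru : (1:ℝ) ≤ r / u := (one_le_div hu0).2 hcase.le
    have hIle : (I.card : ℝ) ≤ (2 / c + 1) ^ 2 * (r / u) ^ 2 := by
      refine hIcard.trans ?_
      rw [← mul_pow]
      refine pow_le_pow_left₀ (by positivity) ?_ 2
      have h1 : 2 * r / (c * u) = (2 / c) * (r / u) := by field_simp
      rw [h1]
      nlinarith [hru]
    have htot : ((Finset.univ.biUnion T).card : ℝ) ≤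
        (2 / c + 1) ^ 2 * (r / u) ^ 2 * (C₀ * δ ^ (-t/2)) := by
      calc ((Finset.univ.biUnion T).card : ℝ) ≤ ∑ i ∈ I, ((T i).card : ℝ) := hsum
        _ ≤ ∑ i ∈ I, (C₀ * δ ^ (-t/2)) := Finset.sum_le_sum (fun i _ => hT2 i)
        _ = I.card * (C₀ * δ ^ (-t/2)) := by rw [Finset.sum_const, nsmul_eq_mul]
        _ ≤ (2 / c + 1) ^ 2 * (r / u) ^ 2 * (C₀ * δ ^ (-t/2)) := by
            apply mul_le_mul_of_nonneg_right hIle (by positivity)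
    refine htot.trans ?_
    -- key arithmetic : (r/u)^2 * δ^{-t/2} ≤ (r/δ)^t
    have hu2 : u ^ 2 = δ ^ (t/2) := by
      rw [hudef, ← Real.rpow_natCast (δ ^ (t/4)) 2, ← Real.rpow_mul hδ0.le]
      congr 1
      ring
    have hδt : δ ^ (t/2) * δ ^ (t/2) = δ ^ t := by
      rw [← Real.rpow_add hδ0]; ring_nf
    have hneg : δ ^ (-t/2) = (δ ^ (t/2))⁻¹ := by
      rw [neg_div, Real.rpow_neg hδ0.le]
    have hr2t : r ^ (2:ℕ) ≤ r ^ t := by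
      rw [← Real.rpow_natCast r 2]
      exact Real.rpow_le_rpow_of_exponent_ge hr0 hr1 (by push_cast; linarith)
    have key : (r / u) ^ 2 * δ ^ (-t/2) ≤ (r / δ) ^ t := by
      have e1 : (r / u) ^ 2 * δ ^ (-t/2) = r ^ 2 / δ ^ t := by
        rw [div_pow, hu2, hneg, ← hδt, ← div_eq_mul_inv, div_div]
      have e2 : (r / δ) ^ t = r ^ t / δ ^ t := Real.div_rpow hr0.le hδ0.le t
      rw [e1, e2]
      gcongr
    calc (2 / c + 1) ^ 2 * (r / u) ^ 2 * (C₀ * δ ^ (-t/2))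
        = C₀ * (2 / c + 1) ^ 2 * ((r / u) ^ 2 * δ ^ (-t/2)) := by ring
      _ ≤ C₀ * (2 / c + 1) ^ 2 * (r / δ) ^ t := by
          apply mul_le_mul_of_nonneg_left key (by positivity)
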